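/- arXiv:2303.03720 — 5 statements merged into one kernel-verified Lean document; each statement's English description precedes it below -/
import Mathlib

section
/- Let (P, y) be a density-greedy prefix with threshold item y for a 0-1 knapsack instance with nonempty finite item set ι, utilities u, weights w, and budget N. Set U₁ = max_{i ∈ ι} u i (the largest single-item utility) and U₂ = ∑_{i ∈ P} u i (the value of the density-greedy prefix). Then every feasible subset S satisfies ∑_{i ∈ S} u i ≤ 2 · max(U₁, U₂); that is, returning the better of the best single item and the density-greedy prefix is a 0.5-approximation to the 0-1 knapsack optimum. -/
/-- **0.5-approximation of the density-greedy + best-single-item rule for 0-1 knapsack.**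
Let `(P, y)` be a density-greedy prefix with threshold item `y` for a 0-1 knapsack
instance with nonempty finite item set `ι`, utilities `u`, weights `w`, and budget `N`.
With `U₁` the largest single-item utility and `U₂` the value of the prefix, every feasible
subset `S` satisfies `∑ i ∈ S, u i ≤ 2 * max U₁ U₂`. -/
theorem knapsack_greedy_half_approx {ι : Type*} [Fintype ι] [Nonempty ι]
    (u w : ι → ℝ) (N : ℝ)
    (hu : ∀ i, 0 ≤ u i) (hw : ∀ i, 0 < w i) (hN : 0 ≤ N)
    (P : Finset ι) (y : ι) (hyP : y ∉ P)
    (hdens_in : ∀ i ∈ P, u y * w i ≤ u i * w y)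
    (hdens_out : ∀ i, i ∉ P → i ≠ y → u i * w y ≤ u y * w i)
    (hfit : ∑ i ∈ P, w i ≤ N)
    (hover : N < ∑ i ∈ P, w i + w y) :
    ∀ S : Finset ι, ∑ i ∈ S, w i ≤ N →
      ∑ i ∈ S, u i ≤
        2 * max (Finset.univ.sup' Finset.univ_nonempty u) (∑ i ∈ P, u i) := by
  classical
  intro S hS
  have hwy := hw y
  set A := ∑ i ∈ S ∩ P, u i with hA
  set B := ∑ i ∈ S \ P, u i with hB
  set a := ∑ i ∈ S ∩ P, w i with ha
  set b := ∑ i ∈ S \ P, w i with hb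
  set Up := ∑ i ∈ P, u i with hUp
  set Wp := ∑ i ∈ P, w i with hWp
  have hsplitu : ∑ i ∈ S, u i = A + B := (Finset.sum_inter_add_sum_sdiff S P u).symm
  have hsplitw : ∑ i ∈ S, w i = a + b := (Finset.sum_inter_add_sum_sdiff S P w).symm
  -- (1) items outside P have density at most that of y
  have h1 : B * w y ≤ u y * b := by
    rw [hB, hb, Finset.sum_mul, Finset.mul_sum]
    apply Finset.sum_le_sum
    intro i hi
    rcases eq_or_ne i y with rfl | hne
    · ring_nf; exact le_rfl
    · exact hdens_out i (Finset.mem_sdiff.mp hi).2 hne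
  -- (2) items in P have density at least that of y
  have hsub : S ∩ P ⊆ P := Finset.inter_subset_right
  have hPu : ∑ i ∈ P \ (S ∩ P), u i = Up - A := Finset.sum_sdiff_eq_sub hsub
  have hPw : ∑ i ∈ P \ (S ∩ P), w i = Wp - a := Finset.sum_sdiff_eq_sub hsub
  have h2 : u y * (Wp - a) ≤ (Up - A) * w y := by
    rw [← hPu, ← hPw, Finset.sum_mul, Finset.mul_sum]
    apply Finset.sum_le_sum
    intro i hi
    exact hdens_in i (Finset.mem_sdiff.mp hi).1
  have hab : a + b ≤ N := by rw [← hsplitw]; exact hS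
  have h3 : u y * b ≤ u y * (Wp + w y - a) :=
    mul_le_mul_of_nonneg_left (by linarith) (hu y)
  have key : (A + B) * w y ≤ (Up + u y) * w y := by nlinarith [h1, h2, h3]
  have key2 : A + B ≤ Up + u y := le_of_mul_le_mul_right key hwy
  have hy1 : u y ≤ Finset.univ.sup' Finset.univ_nonempty u :=
    Finset.le_sup' u (Finset.mem_univ y)
  have hm1 : Finset.univ.sup' Finset.univ_nonempty u ≤
      max (Finset.univ.sup' Finset.univ_nonempty u) Up := le_max_left _ _
  have hm2 : Up ≤ max (Finset.univ.sup' Finset.univ_nonempty u) Up := le_max_right _ _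
  rw [hsplitu]
  linarith
end

section
/- Let (P, y) be a density-greedy prefix with threshold item y for a 0-1 knapsack instance with item set ι, utilities u, weights w, and budget N. Then every feasible subset S satisfies ∑_{i ∈ S} u i ≤ ∑_{i ∈ P} u i + u y; i.e., the value of the density-greedy prefix plus the utility of the first excluded item is an upper bound on the 0-1 knapsack optimum. -/
/-- **Upper bound from the density-greedy prefix plus the first excluded item.**
Let `(P, y)` be a density-greedy prefix with threshold item `y` for a 0-1 knapsack
instance. Then every feasible subset `S` satisfies
`∑ i ∈ S, u i ≤ ∑ i ∈ P, u i + u y`. -/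
theorem knapsack_greedy_prefix_plus_threshold_bound {ι : Type*} [Fintype ι]
    (u w : ι → ℝ) (N : ℝ)
    (hu : ∀ i, 0 ≤ u i) (hw : ∀ i, 0 < w i) (hN : 0 ≤ N)
    (P : Finset ι) (y : ι) (hyP : y ∉ P)
    (hdens_in : ∀ i ∈ P, u y * w i ≤ u i * w y)
    (hdens_out : ∀ i, i ∉ P → i ≠ y → u i * w y ≤ u y * w i)
    (hfit : ∑ i ∈ P, w i ≤ N)
    (hover : N < ∑ i ∈ P, w i + w y) :
    ∀ S : Finset ι, ∑ i ∈ S, w i ≤ N →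
      ∑ i ∈ S, u i ≤ ∑ i ∈ P, u i + u y := by
  intro S hS
  classical
  set T := insert y P with hT
  have hTu : ∑ i ∈ T, u i = ∑ i ∈ P, u i + u y := by
    rw [hT, Finset.sum_insert hyP]; ring
  have hTw : ∑ i ∈ T, w i = ∑ i ∈ P, w i + w y := by
    rw [hT, Finset.sum_insert hyP]; ring
  have eS_u := Finset.sum_inter_add_sum_sdiff S T u
  have eS_w := Finset.sum_inter_add_sum_sdiff S T w
  have eT_u := Finset.sum_inter_add_sum_sdiff T S u
  have eT_w := Finset.sum_inter_add_sum_sdiff T S w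
  have hcu : ∑ i ∈ S ∩ T, u i = ∑ i ∈ T ∩ S, u i := by rw [Finset.inter_comm]
  have hcw : ∑ i ∈ S ∩ T, w i = ∑ i ∈ T ∩ S, w i := by rw [Finset.inter_comm]
  -- weight comparison of the symmetric differences
  have hwdiff : ∑ i ∈ S \ T, w i ≤ ∑ i ∈ T \ S, w i := by
    have h1 : ∑ i ∈ S \ T, w i = ∑ i ∈ S, w i - ∑ i ∈ S ∩ T, w i := by linarith
    have h2 : ∑ i ∈ T \ S, w i = ∑ i ∈ T, w i - ∑ i ∈ T ∩ S, w i := by linarith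
    rw [h1, h2, ← hcw, hTw]; linarith
  -- density inequalities
  have A : ∑ i ∈ S \ T, u i * w y ≤ ∑ i ∈ S \ T, u y * w i := by
    apply Finset.sum_le_sum
    intro i hi
    simp only [Finset.mem_sdiff, hT, Finset.mem_insert, not_or] at hi
    exact hdens_out i hi.2.2 hi.2.1
  have B : ∑ i ∈ T \ S, u y * w i ≤ ∑ i ∈ T \ S, u i * w y := by
    apply Finset.sum_le_sum
    intro i hi
    simp only [Finset.mem_sdiff, hT, Finset.mem_insert] at hi
    rcases hi.1 with h | h
    · subst h; exact le_of_eq (by ring)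
    · exact hdens_in i h
  rw [← Finset.sum_mul, ← Finset.mul_sum] at A
  rw [← Finset.mul_sum, ← Finset.sum_mul] at B
  -- scaled comparison of utilities of the symmetric differences
  have hudiff : (∑ i ∈ S \ T, u i) * w y ≤ (∑ i ∈ T \ S, u i) * w y := by
    calc (∑ i ∈ S \ T, u i) * w y ≤ u y * ∑ i ∈ S \ T, w i := A
      _ ≤ u y * ∑ i ∈ T \ S, w i := by
          exact mul_le_mul_of_nonneg_left hwdiff (hu y)
      _ ≤ (∑ i ∈ T \ S, u i) * w y := B
  have hud : ∑ i ∈ S \ T, u i ≤ ∑ i ∈ T \ S, u i :=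
    le_of_mul_le_mul_right hudiff (hw y)
  have : ∑ i ∈ S, u i ≤ ∑ i ∈ T, u i := by linarith [hcu]
  linarith [hTu]
end

section
/- Let (P, y) be a density-greedy prefix with threshold item y for a 0-1 knapsack instance with item set ι, utilities u, weights w, and budget N. Then for every fractional assignment x : ι → ℝ with 0 ≤ x i ≤ 1 for all i and ∑_{i ∈ ι} x i · w i ≤ N, one has ∑_{i ∈ ι} x i · u i ≤ ∑_{i ∈ P} u i + ((N − ∑_{i ∈ P} w i) / w y) · u y; i.e., taking the density-greedy prefix fully and the appropriate fraction of the threshold item is optimal for the fractional (linear relaxation of the) knapsack problem. -/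
/-- **Optimality of the density-greedy solution for the fractional knapsack relaxation.**
Let `(P, y)` be a density-greedy prefix with threshold item `y`. Then for every fractional
assignment `x : ι → ℝ` with `0 ≤ x i ≤ 1` and `∑ i, x i * w i ≤ N`, we have
`∑ i, x i * u i ≤ ∑ i ∈ P, u i + ((N - ∑ i ∈ P, w i) / w y) * u y`. -/
theorem knapsack_greedy_fractional_optimal {ι : Type*} [Fintype ι]
    (u w : ι → ℝ) (N : ℝ)
    (hu : ∀ i, 0 ≤ u i) (hw : ∀ i, 0 < w i) (hN : 0 ≤ N)
    (P : Finset ι) (y : ι) (hyP : y ∉ P)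
    (hdens_in : ∀ i ∈ P, u y * w i ≤ u i * w y)
    (hdens_out : ∀ i, i ∉ P → i ≠ y → u i * w y ≤ u y * w i)
    (hfit : ∑ i ∈ P, w i ≤ N)
    (hover : N < ∑ i ∈ P, w i + w y) :
    ∀ x : ι → ℝ, (∀ i, 0 ≤ x i) → (∀ i, x i ≤ 1) →
      ∑ i, x i * w i ≤ N →
      ∑ i, x i * u i ≤ ∑ i ∈ P, u i + ((N - ∑ i ∈ P, w i) / w y) * u y := by
  intro x hx0 hx1 hxw
  classical
  have hwy : (0:ℝ) < w y := hw y
  set c : ℝ := u y / w y with hc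
  set t : ℝ := (N - ∑ i ∈ P, w i) / w y with ht
  set g : ι → ℝ := fun i => if i ∈ P then 1 else if i = y then t else 0 with hg
  have ht0 : 0 ≤ t := div_nonneg (by linarith) hwy.le
  have ht1 : t ≤ 1 := by
    rw [ht, div_le_one hwy]; linarith
  have hgw : ∑ i, g i * w i = N := by
    have : ∀ i, g i * w i =
        (if i ∈ P then w i else 0) + (if i = y then t * w y else 0) := by
      intro i
      by_cases hi : i ∈ P
      · have : i ≠ y := fun h => hyP (h ▸ hi)
        simp [hg, hi, this]
      · by_cases hiy : i = y
        · subst hiy; simp [hg, hi]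
        · simp [hg, hi, hiy]
    rw [Finset.sum_congr rfl fun i _ => this i, Finset.sum_add_distrib]
    rw [Finset.sum_ite_mem, Finset.univ_inter, Finset.sum_ite_eq' Finset.univ y]
    simp [ht, div_mul_cancel₀ _ hwy.ne']
  have hgu : ∑ i, g i * u i = ∑ i ∈ P, u i + t * u y := by
    have : ∀ i, g i * u i =
        (if i ∈ P then u i else 0) + (if i = y then t * u y else 0) := by
      intro i
      by_cases hi : i ∈ P
      · have : i ≠ y := fun h => hyP (h ▸ hi)
        simp [hg, hi, this]
      · by_cases hiy : i = y
        · subst hiy; simp [hg, hi]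
        · simp [hg, hi, hiy]
    rw [Finset.sum_congr rfl fun i _ => this i, Finset.sum_add_distrib]
    rw [Finset.sum_ite_mem, Finset.univ_inter, Finset.sum_ite_eq' Finset.univ y]
    simp
  have key : ∀ i, x i * u i ≤ g i * u i + c * (x i * w i - g i * w i) := by
    intro i
    have h : (x i - g i) * (u i - c * w i) ≤ 0 := by
      by_cases hi : i ∈ P
      · have h1 : x i - g i ≤ 0 := by simp [hg, hi]; linarith [hx1 i]
        have h2 : 0 ≤ u i - c * w i := by
          have := hdens_in i hi
          rw [hc]
          rw [sub_nonneg, div_mul_eq_mul_div, div_le_iff₀ hwy]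
          linarith
        exact mul_nonpos_of_nonpos_of_nonneg h1 h2
      · by_cases hiy : i = y
        · have h0 : u i - c * w i = 0 := by
            rw [hiy, hc, div_mul_cancel₀ _ hwy.ne', sub_self]
          rw [h0, mul_zero]
        · have h1 : 0 ≤ x i - g i := by simp [hg, hi, hiy]; linarith [hx0 i]
          have h2 : u i - c * w i ≤ 0 := by
            have := hdens_out i hi hiy
            rw [hc, sub_nonpos, div_mul_eq_mul_div, le_div_iff₀ hwy]
            linarith
          exact mul_nonpos_of_nonneg_of_nonpos h1 h2
    nlinarith [h]
  have hsum : ∑ i, x i * u i ≤ ∑ i, (g i * u i + c * (x i * w i - g i * w i)) :=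
    Finset.sum_le_sum (fun i (_ : i ∈ Finset.univ) => key i)
  have hexp : ∑ i, (g i * u i + c * (x i * w i - g i * w i))
      = ∑ i, g i * u i + c * (∑ i, x i * w i - ∑ i, g i * w i) := by
    rw [Finset.sum_add_distrib]
    congr 1
    rw [← Finset.mul_sum, Finset.sum_sub_distrib]
  rw [hexp] at hsum
  have hc0 : 0 ≤ c := div_nonneg (hu y) hwy.le
  have : c * (∑ i, x i * w i - ∑ i, g i * w i) ≤ 0 := by
    apply mul_nonpos_of_nonneg_of_nonpos hc0
    rw [hgw]; linarith
  calc ∑ i, x i * u i ≤ ∑ i, g i * u i + c * (∑ i, x i * w i - ∑ i, g i * w i) := hsum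
    _ ≤ ∑ i, g i * u i := by linarith
    _ = ∑ i ∈ P, u i + t * u y := hgu
    _ = ∑ i ∈ P, u i + ((N - ∑ i ∈ P, w i) / w y) * u y := by rw [ht]
end

section
/- Let a time-dependent graph on a vertex set V have nonnegative weights all satisfying the FIFO property. Let s, d ∈ V, let t ∈ ℝ, and let X be a finite nonempty set of vertices such that every walk from s to d contains a vertex of X. Assume that for each v ∈ X there exist walks from s to v and from v to d, and that the infima defining f s v (t), f v d (t + f s v (t)) for v ∈ X, and f s d (t) are each attained by some walk. Then f s d (t) = min_{v ∈ X} ( f s v (t) + f v d (t + f s v (t)) ); i.e., the shortest travel cost from s to d decomposes as the minimum over the vertex cut X of the compound of the shortest travel costs to and from the cut vertex. -/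
/-- The travel cost of a walk (a nonempty list of vertices) when departing at time `t`:
`cost([x], t) = 0` and `cost(x :: y :: rest, t) = w x y t + cost(y :: rest, t + w x y t)`. -/
def tdCost {V : Type*} (w : V → V → ℝ → ℝ) : List V → ℝ → ℝ
  | [], _ => 0
  | [_], _ => 0
  | x :: y :: rest, t => w x y t + tdCost w (y :: rest) (t + w x y t)

/-- `p` is a walk from `s` to `d`: a nonempty finite sequence of vertices
starting at `s` and ending at `d`. -/
def IsTDWalk {V : Type*} (p : List V) (s d : V) : Prop :=
  p ≠ [] ∧ p.head? = some s ∧ p.getLast? = some d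

/-- The shortest travel cost function:
`f s d t = inf { cost(p, t) : p a walk from s to d }`. -/
noncomputable def tdShortest {V : Type*} (w : V → V → ℝ → ℝ) (s d : V) (t : ℝ) : ℝ :=
  sInf {c | ∃ p : List V, IsTDWalk p s d ∧ tdCost w p t = c}


lemma tdCost_nonneg {V : Type*} (w : V → V → ℝ → ℝ) (hnn : ∀ a b t, 0 ≤ w a b t) :
    ∀ (p : List V) (t : ℝ), 0 ≤ tdCost w p t := by
  intro p
  induction p with
  | nil => intro t; simp [tdCost]
  | cons x xs ih =>
    intro t
    cases xs with
    | nil => simp [tdCost]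
    | cons y rest =>
      simp only [tdCost]
      exact add_nonneg (hnn _ _ _) (ih _)

lemma tdArrive_mono {V : Type*} (w : V → V → ℝ → ℝ)
    (hfifo : ∀ a b, Monotone fun t => t + w a b t) :
    ∀ (p : List V), Monotone fun t => t + tdCost w p t := by
  intro p
  induction p with
  | nil => intro t1 t2 h; simpa [tdCost] using h
  | cons x xs ih =>
    cases xs with
    | nil => intro t1 t2 h; simpa [tdCost] using h
    | cons y rest =>
      intro t1 t2 h
      simp only [tdCost]
      have h1 : t1 + w x y t1 ≤ t2 + w x y t2 := hfifo x y h
      have h2 := ih h1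
      simp only at h2
      linarith

lemma tdCost_append {V : Type*} (w : V → V → ℝ → ℝ) (v : V) :
    ∀ (a b : List V) (t : ℝ),
      tdCost w (a ++ v :: b) t
        = tdCost w (a ++ [v]) t + tdCost w (v :: b) (t + tdCost w (a ++ [v]) t) := by
  intro a
  induction a with
  | nil => intro b t; simp [tdCost]
  | cons x xs ih =>
    intro b t
    cases xs with
    | nil => cases b <;> simp [tdCost]
    | cons y ys =>
      simp only [List.cons_append, tdCost, List.append_eq]
      rw [show (y :: (ys ++ v :: b)) = (y :: ys ++ v :: b) from rfl, ih]
      ring_nf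
      rfl

lemma td_head?_append_cons {V : Type*} (a : List V) (v : V) (b : List V) :
    (a ++ v :: b).head? = (a ++ [v]).head? := by cases a <;> simp

lemma td_getLast?_append_cons {V : Type*} (a : List V) (v : V) (b : List V) :
    (a ++ v :: b).getLast? = (v :: b).getLast? := by
  rw [List.getLast?_append_of_ne_nil] ; simp

/-- **Vertex-cut decomposition of the shortest travel cost.**
If every walk from `s` to `d` passes through the finite nonempty set `X`, walks to and
from each cut vertex exist, and the relevant infima are attained, then
`f s d t = min_{v ∈ X} (f s v t + f v d (t + f s v t))`. -/
theorem tdShortest_vertex_cut {V : Type*} (w : V → V → ℝ → ℝ)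
    (hnn : ∀ a b t, 0 ≤ w a b t)
    (hfifo : ∀ a b, Monotone fun t => t + w a b t)
    (s d : V) (t : ℝ) (X : Finset V) (hX : X.Nonempty)
    (hcut : ∀ p : List V, IsTDWalk p s d → ∃ v ∈ X, v ∈ p)
    (hsv : ∀ v ∈ X, ∃ p : List V, IsTDWalk p s v)
    (hvd : ∀ v ∈ X, ∃ p : List V, IsTDWalk p v d)
    (hatt_sv : ∀ v ∈ X, ∃ p : List V, IsTDWalk p s v ∧ tdCost w p t = tdShortest w s v t)
    (hatt_vd : ∀ v ∈ X, ∃ p : List V, IsTDWalk p v d ∧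
        tdCost w p (t + tdShortest w s v t) = tdShortest w v d (t + tdShortest w s v t))
    (hatt_sd : ∃ p : List V, IsTDWalk p s d ∧ tdCost w p t = tdShortest w s d t) :
    tdShortest w s d t =
      X.inf' hX (fun v => tdShortest w s v t + tdShortest w v d (t + tdShortest w s v t)) := by
  have hbdd : ∀ (a b : V) (t' : ℝ),
      BddBelow {c | ∃ p : List V, IsTDWalk p a b ∧ tdCost w p t' = c} := by
    intro a b t'
    exact ⟨0, by rintro c ⟨q, -, rfl⟩; exact tdCost_nonneg w hnn q t'⟩
  have hle : ∀ {p : List V} {a b : V}, IsTDWalk p a b → ∀ t' : ℝ,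
      tdShortest w a b t' ≤ tdCost w p t' :=
    fun {p a b} hp t' => csInf_le (hbdd a b t') ⟨p, hp, rfl⟩
  apply le_antisymm
  · apply Finset.le_inf'
    intro v hv
    obtain ⟨p, hp, hpc⟩ := hatt_sv v hv
    obtain ⟨q, hq, hqc⟩ := hatt_vd v hv
    have hpl : p.getLast hp.1 = v := by
      have := hp.2.2
      rw [List.getLast?_eq_getLast hp.1] at this
      exact Option.some.inj this
    have hpeq : p = p.dropLast ++ [v] := by
      conv_lhs => rw [← List.dropLast_append_getLast hp.1]
      rw [hpl]
    have hqh : q.head hq.1 = v := by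
      have := hq.2.1
      rw [List.head?_eq_head hq.1] at this
      exact Option.some.inj this
    have hqeq : q = v :: q.tail := by
      conv_lhs => rw [← List.cons_head_tail hq.1]
      rw [hqh]
    set a := p.dropLast
    set b := q.tail
    have hr : IsTDWalk (a ++ v :: b) s d := by
      refine ⟨by simp, ?_, ?_⟩
      · rw [td_head?_append_cons, ← hpeq]; exact hp.2.1
      · rw [td_getLast?_append_cons, ← hqeq]; exact hq.2.2
    have hcost : tdCost w (a ++ v :: b) t
        = tdShortest w s v t + tdShortest w v d (t + tdShortest w s v t) := by
      rw [tdCost_append w v a b t, ← hpeq, hpc, ← hqeq, hqc]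
    calc tdShortest w s d t ≤ tdCost w (a ++ v :: b) t := hle hr t
      _ = _ := hcost
  · obtain ⟨p, hp, hpc⟩ := hatt_sd
    obtain ⟨v, hvX, hvp⟩ := hcut p hp
    obtain ⟨a, b, rfl⟩ := List.append_of_mem hvp
    have hp1 : IsTDWalk (a ++ [v]) s v := by
      refine ⟨by simp, ?_, by simp⟩
      rw [← td_head?_append_cons a v b]; exact hp.2.1
    have hp2 : IsTDWalk (v :: b) v d := by
      refine ⟨by simp, rfl, ?_⟩
      rw [← td_getLast?_append_cons a v b]; exact hp.2.2
    set c1 := tdCost w (a ++ [v]) t with hc1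
    have h1 : tdShortest w s v t ≤ c1 := hle hp1 t
    have h2 : tdShortest w v d (t + tdShortest w s v t)
        ≤ tdCost w (v :: b) (t + tdShortest w s v t) := hle hp2 _
    have h3 := tdArrive_mono w hfifo (v :: b)
      (show t + tdShortest w s v t ≤ t + c1 by linarith)
    simp only at h3
    have hsplit : tdCost w (a ++ v :: b) t = c1 + tdCost w (v :: b) (t + c1) :=
      tdCost_append w v a b t
    calc X.inf' hX (fun v => tdShortest w s v t + tdShortest w v d (t + tdShortest w s v t))
        ≤ tdShortest w s v t + tdShortest w v d (t + tdShortest w s v t) :=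
          Finset.inf'_le _ hvX
      _ ≤ tdShortest w s d t := by rw [← hpc, hsplit]; linarith
end

section
/- Let G be a simple graph on V, T a tree on index set ι, and B : ι → Set V a tree decomposition of G. Suppose s ∈ B i and d ∈ B j, and let k ∈ ι be such that every walk from i to j in T passes through k. Then every walk from s to d in G contains at least one vertex of the bag B k; i.e., any bag on the tree path between the bags of s and d (in particular the bag of their lowest common ancestor) is a vertex cut separating s and d in G. -/
private lemma bagConnWalk {V ι : Type*} (T : SimpleGraph ι) (B : ι → Set V)
    (hconn : ∀ x : V, (T.induce {i : ι | x ∈ B i}).Connected)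
    {x : V} {m n k : ι} (hm : x ∈ B m) (hn : x ∈ B n) (hxk : x ∉ B k) :
    ∃ p : T.Walk m n, k ∉ p.support := by
  obtain ⟨w⟩ := (hconn x) ⟨m, hm⟩ ⟨n, hn⟩
  refine ⟨w.map (SimpleGraph.Embedding.induce _).toHom, ?_⟩
  intro hkmem
  replace hkmem : k ∈ (w.map (SimpleGraph.Embedding.induce {i : ι | x ∈ B i}).toHom).support := hkmem
  rw [SimpleGraph.Walk.support_map] at hkmem
  obtain ⟨a, _, ha⟩ := List.mem_map.mp hkmem
  exact hxk (ha ▸ a.prop)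

private lemma walkSide {V ι : Type*} (G : SimpleGraph V) (T : SimpleGraph ι)
    (B : ι → Set V)
    (hedge : ∀ x y : V, G.Adj x y → ∃ i : ι, x ∈ B i ∧ y ∈ B i)
    (hconn : ∀ x : V, (T.induce {i : ι | x ∈ B i}).Connected)
    {k : ι} :
    ∀ {s d : V} (q : G.Walk s d) {i j : ι}, s ∈ B i → d ∈ B j →
      (∀ x ∈ q.support, x ∉ B k) → ∃ p : T.Walk i j, k ∉ p.support := by
  intro s d q
  induction q with
  | nil =>
    intro i j hs hd hsup
    exact bagConnWalk T B hconn hs hd (hsup _ (by simp))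
  | cons h q ih =>
    rename_i u v w
    intro i j hs hd hsup
    obtain ⟨m, hum, hvm⟩ := hedge _ _ h
    have hu : u ∉ B k := hsup u (by simp)
    obtain ⟨p₁, hp₁⟩ := bagConnWalk T B hconn hs hum hu
    obtain ⟨p₂, hp₂⟩ := ih hvm hd (fun x hx => hsup x (by simp [hx]))
    refine ⟨p₁.append p₂, ?_⟩
    rw [SimpleGraph.Walk.support_append]
    intro hmem
    rcases List.mem_append.mp hmem with h1 | h2
    · exact hp₁ h1
    · exact hp₂ (List.mem_of_mem_tail h2)

/-- **Bags on the tree path are vertex cuts (tree decomposition separator property).**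
Let `G` be a simple graph on `V`, `T` a tree on the index set `ι`, and `B : ι → Set V` a
tree decomposition of `G`: every vertex lies in some bag, every edge is contained in some
bag, and for every vertex the set of bags containing it induces a connected subgraph of
`T`. If `s ∈ B i`, `d ∈ B j`, and every walk from `i` to `j` in `T` passes through `k`,
then every walk from `s` to `d` in `G` contains a vertex of the bag `B k`. -/
theorem tree_decomposition_bag_is_cut {V ι : Type*}
    (G : SimpleGraph V) (T : SimpleGraph ι) (hT : T.IsTree)
    (B : ι → Set V)
    (hcover : ∀ x : V, ∃ i : ι, x ∈ B i)
    (hedge : ∀ x y : V, G.Adj x y → ∃ i : ι, x ∈ B i ∧ y ∈ B i)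
    (hconn : ∀ x : V, (T.induce {i : ι | x ∈ B i}).Connected)
    (s d : V) (i j k : ι) (hs : s ∈ B i) (hd : d ∈ B j)
    (hk : ∀ p : T.Walk i j, k ∈ p.support) :
    ∀ q : G.Walk s d, ∃ x ∈ B k, x ∈ q.support := by
  intro q
  by_contra hne
  push_neg at hne
  obtain ⟨p, hp⟩ := walkSide G T B hedge hconn q hs hd
    (fun x hx hxk => hne x hxk hx)
  exact hp (hk p)
end
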